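/- arXiv:1505.00415 — 9 statements merged into one kernel-verified Lean document; each statement's English description precedes it below -/
import Mathlib

section
/- Let H be a connected topological group, L a topological group, and f : H → L a continuous surjective closed homomorphism with finite kernel. If l₁, …, l_k topologically generate L and h₁, …, h_k are elements of H with f(hᵢ) = lᵢ, then h₁, …, h_k topologically generate H. -/
/-- Lifting topological generators through a finite covering map. -/
theorem stmt1 {H L : Type*} [Group H] [TopologicalSpace H] [IsTopologicalGroup H]
    [ConnectedSpace H] [BaireSpace H]
    [Group L] [TopologicalSpace L] [IsTopologicalGroup L]
    (f : H →* L) (hcont : Continuous f) (hsurj : Function.Surjective f)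
    (hclosed : IsClosedMap f) (hker : Finite f.ker)
    {k : ℕ} (l : Fin k → L)
    (hl : Dense ((Subgroup.closure (Set.range l) : Subgroup L) : Set L))
    (h : Fin k → H) (hfh : ∀ i, f (h i) = l i) :
    Dense ((Subgroup.closure (Set.range h) : Subgroup H) : Set H) := by
  set M : Subgroup H := (Subgroup.closure (Set.range h)).topologicalClosure with hM
  have hMclosed : IsClosed (M : Set H) := (Subgroup.closure (Set.range h)).isClosed_topologicalClosure
  -- f '' M = univ
  have himg : f '' (M : Set H) = Set.univ := by
    have h1 : IsClosed (f '' (M : Set H)) := hclosed _ hMclosed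
    have h2 : (Subgroup.closure (Set.range l) : Set L) ⊆ f '' (M : Set H) := by
      have hr : Set.range l = f '' Set.range h := by
        ext x
        simp only [Set.mem_range, Set.mem_image]
        constructor
        · rintro ⟨i, rfl⟩; exact ⟨h i, ⟨i, rfl⟩, hfh i⟩
        · rintro ⟨y, ⟨i, rfl⟩, rfl⟩; exact ⟨i, (hfh i).symm⟩
      have : Subgroup.closure (Set.range l) ≤ Subgroup.map f M := by
        rw [hr, ← MonoidHom.map_closure]
        exact Subgroup.map_mono (Subgroup.le_topologicalClosure _)
      exact this
    have := hl.mono h2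
    exact h1.closure_eq ▸ this.closure_eq
  -- every x ∈ H is k * m with k ∈ ker, m ∈ M
  have hcover : ∀ x : H, ∃ m ∈ M, ∃ c ∈ f.ker, x = c * m := by
    intro x
    have : f x ∈ f '' (M : Set H) := himg ▸ Set.mem_univ _
    obtain ⟨m, hm, hfm⟩ := this
    refine ⟨m, hm, x * m⁻¹, ?_, by group⟩
    simp [MonoidHom.mem_ker, hfm]
  -- H ⧸ M is finite
  have hquot : Finite (H ⧸ M) := by
    have : Function.Surjective (fun c : f.ker => (QuotientGroup.mk c.1 : H ⧸ M)) := by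
      intro q
      obtain ⟨x, rfl⟩ := QuotientGroup.mk_surjective q
      obtain ⟨m, hm, c, hc, rfl⟩ := hcover x
      refine ⟨⟨c, hc⟩, ?_⟩
      exact (QuotientGroup.mk_mul_of_mem c hm).symm
    exact Finite.of_surjective _ this
  have : M.FiniteIndex := Subgroup.finiteIndex_of_finite_quotient (H := M)
  have hopen : IsOpen (M : Set H) := Subgroup.isOpen_of_isClosed_of_finiteIndex M hMclosed
  have : (M : Set H) = Set.univ :=
    IsClopen.eq_univ ⟨hMclosed, hopen⟩ ⟨1, M.one_mem⟩
  have hd : closure ((Subgroup.closure (Set.range h) : Subgroup H) : Set H) = Set.univ := this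
  exact dense_iff_closure_eq.mpr hd
end

section
/- Let G be a topological group and N a closed normal subgroup. Then the infinitesimal rank of G is at most the infinitesimal rank of N plus the infinitesimal rank of G/N. In particular, if both N and G/N are infinitesimally finitely generated, then so is G. -/
open Filter Topology

/-- `G` is infinitesimally `n`-generated: every neighborhood of the identity contains
`n` elements generating a dense subgroup. -/
def InfGen (G : Type*) [Group G] [TopologicalSpace G] (n : ℕ) : Prop :=
  ∀ U ∈ 𝓝 (1 : G), ∃ g : Fin n → G, (∀ i, g i ∈ U) ∧
    Dense ((Subgroup.closure (Set.range g) : Subgroup G) : Set G)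

/-- The infinitesimal rank of a topological group, an element of `ℕ∞`. -/
noncomputable def infRank (G : Type*) [Group G] [TopologicalSpace G] : ℕ∞ :=
  sInf {n : ℕ∞ | ∃ k : ℕ, n = (k : ℕ∞) ∧ InfGen G k}

lemma infGen_add {G : Type*} [Group G] [TopologicalSpace G] [IsTopologicalGroup G]
    (N : Subgroup G) [N.Normal] {m k : ℕ}
    (hm : InfGen N m) (hk : InfGen (G ⧸ N) k) : InfGen G (m + k) := by
  intro U hU
  -- elements of N close to 1
  have hUN : (Subtype.val ⁻¹' U : Set N) ∈ 𝓝 (1 : N) := by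
    have : ContinuousAt (Subtype.val : N → G) 1 := continuous_subtype_val.continuousAt
    exact this.preimage_mem_nhds (by simpa using hU)
  obtain ⟨g, hgU, hgdense⟩ := hm _ hUN
  -- elements of G/N close to 1
  have hUQ : (QuotientGroup.mk '' U : Set (G ⧸ N)) ∈ 𝓝 (1 : G ⧸ N) := by
    have := (QuotientGroup.isOpenMap_coe (N := N)).image_mem_nhds hU
    simpa using this
  obtain ⟨hbar, hhU, hhdense⟩ := hk _ hUQ
  choose h hhU' hπ using hhU
  -- combine
  refine ⟨Fin.append (fun i => (g i : G)) h, ?_, ?_⟩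
  · intro i
    refine Fin.addCases (fun j => ?_) (fun j => ?_) i
    · rw [Fin.append_left]; exact hgU j
    · rw [Fin.append_right]; exact hhU' j
  set g' : Fin (m + k) → G := Fin.append (fun i => (g i : G)) h with hg'
  set H : Subgroup G := Subgroup.closure (Set.range g') with hH
  set C : Subgroup G := H.topologicalClosure with hC
  have hgmem : ∀ i, (g i : G) ∈ H := fun i => by
    apply Subgroup.subset_closure
    exact ⟨Fin.castAdd k i, Fin.append_left _ _ i⟩
  have hhmem : ∀ i, h i ∈ H := fun i => by
    apply Subgroup.subset_closure
    exact ⟨Fin.natAdd m i, Fin.append_right _ _ i⟩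
  -- Step 1 : N ≤ C
  have hNC : N ≤ C := by
    intro x hx
    have hx1 : (⟨x, hx⟩ : N) ∈ closure ((Subgroup.closure (Set.range g) : Subgroup N) : Set N) :=
      hgdense _
    rw [closure_subtype] at hx1
    have himg : (Subtype.val '' ((Subgroup.closure (Set.range g) : Subgroup N) : Set N))
        ⊆ (H : Set G) := by
      have : Subgroup.map N.subtype (Subgroup.closure (Set.range g)) ≤ H := by
        rw [MonoidHom.map_closure]
        apply Subgroup.closure_le H |>.2
        rintro _ ⟨_, ⟨i, rfl⟩, rfl⟩
        exact hgmem i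
      intro y hy
      exact this (by simpa [Subgroup.mem_map] using hy)
    have := closure_mono himg hx1
    have hclosed : IsClosed (C : Set G) := Subgroup.isClosed_topologicalClosure H
    exact (hclosed.closure_subset_iff.2 (Subgroup.le_topologicalClosure H)) this
  -- Step 2 : the image of C in G/N is a closed subgroup containing a dense subgroup
  set D : Subgroup (G ⧸ N) := Subgroup.map (QuotientGroup.mk' N) C with hD
  have hDset : (D : Set (G ⧸ N)) = QuotientGroup.mk '' (C : Set G) := by
    ext q
    simp only [hD, Subgroup.mem_map, SetLike.mem_coe, Set.mem_image, QuotientGroup.mk'_apply]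
  have hsat : ∀ a c : G, c ∈ C →
      (QuotientGroup.mk a : G ⧸ N) = QuotientGroup.mk c → a ∈ C := by
    intro a c hc hac
    have : c⁻¹ * a ∈ N := (QuotientGroup.eq).1 hac.symm
    have : c * (c⁻¹ * a) ∈ C := C.mul_mem hc (hNC this)
    simpa using this
  have hDclosed : IsClosed (D : Set (G ⧸ N)) := by
    rw [hDset]
    rw [← isOpen_compl_iff]
    have hcompl : ((QuotientGroup.mk '' (C : Set G) : Set (G ⧸ N)))ᶜ
        = (QuotientGroup.mk '' ((C : Set G))ᶜ : Set (G ⧸ N)) := by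
      ext q
      constructor
      · intro hq
        obtain ⟨a, rfl⟩ := QuotientGroup.mk_surjective q
        exact ⟨a, fun ha => hq ⟨a, ha, rfl⟩, rfl⟩
      · rintro ⟨a, ha, rfl⟩ ⟨c, hc, hcq⟩
        exact ha (hsat a c hc hcq.symm)
    rw [hcompl]
    exact QuotientGroup.isOpenMap_coe _ (Subgroup.isClosed_topologicalClosure H).isOpen_compl
  have hhbarD : Subgroup.closure (Set.range hbar) ≤ D := by
    apply Subgroup.closure_le D |>.2
    rintro _ ⟨i, rfl⟩
    rw [← hπ i]
    exact ⟨h i, Subgroup.le_topologicalClosure H (hhmem i), rfl⟩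
  have hDtop : (D : Set (G ⧸ N)) = Set.univ := by
    apply Set.eq_univ_of_univ_subset
    rw [← hhdense.closure_eq]
    exact hDclosed.closure_subset_iff.2 hhbarD
  -- conclude
  have : (C : Set G) = Set.univ := by
    apply Set.eq_univ_of_forall
    intro x
    have hx : (QuotientGroup.mk x : G ⧸ N) ∈ (D : Set (G ⧸ N)) := by
      rw [hDtop]; trivial
    rw [hDset] at hx
    obtain ⟨c, hc, hcx⟩ := hx
    exact hsat x c hc hcx.symm
  have : closure (H : Set G) = Set.univ := by
    rw [← this]; rfl
  rw [dense_iff_closure_eq]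
  exact this

/-- `t_I(G) ≤ t_I(N) + t_I(G/N)` for a closed normal subgroup `N` of `G`. -/
theorem stmt3 {G : Type*} [Group G] [TopologicalSpace G] [IsTopologicalGroup G]
    (N : Subgroup G) [N.Normal] (hN : IsClosed (N : Set G)) :
    infRank G ≤ infRank N + infRank (G ⧸ N) := by
  by_cases h1 : {n : ℕ∞ | ∃ k : ℕ, n = (k : ℕ∞) ∧ InfGen N k}.Nonempty
  · by_cases h2 : {n : ℕ∞ | ∃ k : ℕ, n = (k : ℕ∞) ∧ InfGen (G ⧸ N) k}.Nonempty
    · obtain ⟨m, hm, hmgen⟩ := csInf_mem h1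
      obtain ⟨k, hk, hkgen⟩ := csInf_mem h2
      have := infGen_add N hmgen hkgen
      calc infRank G ≤ ((m + k : ℕ) : ℕ∞) := sInf_le ⟨m + k, rfl, this⟩
        _ = (m : ℕ∞) + (k : ℕ∞) := by push_cast; ring
        _ = infRank N + infRank (G ⧸ N) := by rw [← hm, ← hk]; rfl
    · have : infRank (G ⧸ N) = ⊤ := by
        rw [infRank, Set.not_nonempty_iff_eq_empty.1 h2, sInf_empty]
      rw [this, add_top]; exact le_top
  · have : infRank N = ⊤ := by
      rw [infRank, Set.not_nonempty_iff_eq_empty.1 h1, sInf_empty]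
    rw [this, top_add]; exact le_top
end

section
/- Any product of quasi non-archimedean topological groups, with the product topology, is quasi non-archimedean. -/
open Topology

/-- A topological group is quasi non-archimedean if for every neighborhood `V` of the
identity and every `n`, there is a neighborhood `U` of the identity such that any `n`
elements of `U` generate a subgroup contained in `V`. -/
def QuasiNonArchimedean (G : Type*) [Group G] [TopologicalSpace G] : Prop :=
  ∀ V ∈ 𝓝 (1 : G), ∀ n : ℕ, ∃ U ∈ 𝓝 (1 : G),
    ∀ g : Fin n → G, (∀ i, g i ∈ U) →
      ((Subgroup.closure (Set.range g) : Subgroup G) : Set G) ⊆ V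

/-- An arbitrary product of quasi non-archimedean groups, with the product topology,
is quasi non-archimedean. -/
theorem stmt6 {ι : Type*} (G : ι → Type*) [∀ i, Group (G i)]
    [∀ i, TopologicalSpace (G i)] (h : ∀ i, QuasiNonArchimedean (G i)) :
    QuasiNonArchimedean (∀ i, G i) := by
  intro V hV n
  rw [nhds_pi, Filter.mem_pi] at hV
  obtain ⟨I, hIfin, t, ht, hsub⟩ := hV
  choose U hU hUspec using fun i => h i (t i) (ht i) n
  refine ⟨I.pi U, ?_, ?_⟩
  · rw [nhds_pi, Filter.mem_pi]
    exact ⟨I, hIfin, U, hU, fun x hx => hx⟩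
  · intro g hg x hx
    apply hsub
    intro i hi
    have hmem : x i ∈ Subgroup.map (Pi.evalMonoidHom G i)
        (Subgroup.closure (Set.range g)) := ⟨x, hx, rfl⟩
    rw [MonoidHom.map_closure] at hmem
    have : (Pi.evalMonoidHom G i) '' Set.range g = Set.range (fun k => g k i) := by
      ext y
      simp [Pi.evalMonoidHom]
    rw [this] at hmem
    exact hUspec i (fun k => g k i) (fun k => hg k i hi) hmem
end

section
/- Let G be an infinitesimally finitely generated topological group, H a Hausdorff quasi non-archimedean topological group, and φ : G → H a continuous group homomorphism. Then φ is trivial, i.e., φ(g) = 1 for all g ∈ G. -/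
open Topology

/-- `G` is infinitesimally finitely generated. -/
def InfinitesimallyFinitelyGenerated (G : Type*) [Group G] [TopologicalSpace G] : Prop :=
  ∃ n : ℕ, InfGen G n

/-- Every continuous homomorphism from an infinitesimally finitely generated group
into a Hausdorff quasi non-archimedean group is trivial. -/
theorem stmt8 {G H : Type*} [Group G] [TopologicalSpace G]
    [Group H] [TopologicalSpace H] [T2Space H]
    (hG : InfinitesimallyFinitelyGenerated G) (hH : QuasiNonArchimedean H)
    (φ : G →* H) (hφ : Continuous φ) :
    ∀ g : G, φ g = 1 := by
  obtain ⟨n, hn⟩ := hG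
  intro g
  have key : ∀ V ∈ 𝓝 (1 : H), φ g ∈ closure V := by
    intro V hV
    obtain ⟨U, hU, hgen⟩ := hH V hV n
    have hpre : φ ⁻¹' U ∈ 𝓝 (1 : G) := by
      have : ContinuousAt φ 1 := hφ.continuousAt
      exact this.preimage_mem_nhds (by simpa using hU)
    obtain ⟨e, he, hdense⟩ := hn (φ ⁻¹' U) hpre
    have hsub : (φ '' ((Subgroup.closure (Set.range e) : Subgroup G) : Set G)) ⊆ V := by
      have hV' := hgen (φ ∘ e) (fun i => he i)
      rintro x ⟨y, hy, rfl⟩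
      apply hV'
      have : φ y ∈ (Subgroup.closure (Set.range e)).map φ :=
        Subgroup.mem_map_of_mem φ hy
      rw [MonoidHom.map_closure] at this
      simpa [Set.range_comp] using this
    have hgu : φ g ∈ closure (φ '' ((Subgroup.closure (Set.range e) : Subgroup G) : Set G)) := by
      have : g ∈ closure ((Subgroup.closure (Set.range e) : Subgroup G) : Set G) := by
        rw [hdense.closure_eq]; trivial
      exact (image_closure_subset_closure_image hφ) ⟨g, this, rfl⟩
    exact closure_mono hsub hgu
  by_contra hne
  obtain ⟨u, v, hu, hv, hxu, h1v, hdisj⟩ := t2_separation hne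
  have hvn : v ∈ 𝓝 (1 : H) := hv.mem_nhds h1v
  have := key v hvn
  rw [mem_closure_iff] at this
  obtain ⟨z, hz⟩ := this u hu hxu
  exact hdisj.ne_of_mem hz.1 hz.2 rfl
end

section
/- The only topological group that is both infinitesimally finitely generated and quasi non-archimedean and Hausdorff is the trivial group. -/
open Topology

/-- A Hausdorff topological group which is both infinitesimally finitely generated and
quasi non-archimedean is trivial. -/
theorem stmt9 {G : Type*} [Group G] [TopologicalSpace G] [T2Space G]
    (h1 : InfinitesimallyFinitelyGenerated G) (h2 : QuasiNonArchimedean G) :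
    ∀ g : G, g = 1 := by
  obtain ⟨n, hn⟩ := h1
  intro x
  have key : ∀ V ∈ 𝓝 (1 : G), x ∈ closure V := by
    intro V hV
    obtain ⟨U, hU, hUV⟩ := h2 V hV n
    obtain ⟨g, hg, hdense⟩ := hn U hU
    have : closure ((Subgroup.closure (Set.range g) : Subgroup G) : Set G) ⊆ closure V :=
      closure_mono (hUV g hg)
    exact this (hdense x)
  have hne : (𝓝 x ⊓ 𝓝 (1 : G)).NeBot := by
    rw [Filter.inf_neBot_iff]
    intro W hW V hV
    exact mem_closure_iff_nhds.mp (key V hV) W hW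
  exact eq_of_nhds_neBot hne
end

section
/- Let S be a nonabelian group and let G = S₁ × ⋯ × S_k (k ≥ 2) be a finite product of simple nonabelian groups. If R is a proper subgroup of G that projects onto each factor Sᵢ, then there exist indices i ≠ j and an isomorphism φ : Sᵢ → S_j such that for all r ∈ R, φ(projᵢ(r)) = proj_j(r). -/
section Aux
variable {k : ℕ} {S : Fin k → Type*} [∀ i, Group (S i)]

/-- The subgroup of `R` of elements trivial on the coordinates in `T`. -/
def Hsub (R : Subgroup (∀ i, S i)) (T : Finset (Fin k)) : Subgroup (∀ i, S i) where
  carrier := {r | r ∈ R ∧ ∀ j ∈ T, r j = 1}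
  one_mem' := ⟨R.one_mem, fun j _ => rfl⟩
  mul_mem' := fun {a b} ha hb => ⟨R.mul_mem ha.1 hb.1, fun j hj => by
    simp [Pi.mul_apply, ha.2 j hj, hb.2 j hj]⟩
  inv_mem' := fun {a} ha => ⟨R.inv_mem ha.1, fun j hj => by
    simp [Pi.inv_apply, ha.2 j hj]⟩

lemma Hsub_conj (R : Subgroup (∀ i, S i)) (T : Finset (Fin k)) {r h : ∀ i, S i}
    (hr : r ∈ R) (hh : h ∈ Hsub R T) : r * h * r⁻¹ ∈ Hsub R T :=
  ⟨R.mul_mem (R.mul_mem hr hh.1) (R.inv_mem hr), fun j hj => by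
    simp [Pi.mul_apply, Pi.inv_apply, hh.2 j hj]⟩

/-- Projection of `Hsub R T` to the `i`-th coordinate. -/
def Pmap (R : Subgroup (∀ i, S i)) (T : Finset (Fin k)) (i : Fin k) : Subgroup (S i) :=
  (Hsub R T).map (Pi.evalMonoidHom S i)

lemma mem_Pmap {R : Subgroup (∀ i, S i)} {T : Finset (Fin k)} {i : Fin k} {s : S i} :
    s ∈ Pmap R T i ↔ ∃ h ∈ Hsub R T, h i = s := by
  simp [Pmap, Subgroup.mem_map, Pi.evalMonoidHom_apply]

lemma Pmap_normal (R : Subgroup (∀ i, S i)) (T : Finset (Fin k)) (i : Fin k)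
    (hproj : ∀ s : S i, ∃ r ∈ R, r i = s) : (Pmap R T i).Normal := by
  constructor
  intro n hn g
  obtain ⟨h, hh, hhi⟩ := mem_Pmap.mp hn
  obtain ⟨r, hr, hri⟩ := hproj g
  exact mem_Pmap.mpr ⟨r * h * r⁻¹, Hsub_conj R T hr hh, by
    simp [Pi.mul_apply, Pi.inv_apply, hri, hhi]⟩

end Aux

/-- Goursat-type lemma: a proper subgroup of a finite product of nonabelian simple
groups that projects onto each factor has two isomorphically related projections. -/
theorem stmt11 {k : ℕ} (hk : 2 ≤ k) (S : Fin k → Type*) [∀ i, Group (S i)]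
    [∀ i, IsSimpleGroup (S i)] (hna : ∀ i, ∃ a b : S i, a * b ≠ b * a)
    (R : Subgroup (∀ i, S i)) (hR : R ≠ ⊤)
    (hproj : ∀ i, ∀ s : S i, ∃ r ∈ R, r i = s) :
    ∃ i j : Fin k, i ≠ j ∧ ∃ φ : S i ≃* S j, ∀ r ∈ R, φ (r i) = r j := by
  classical
  by_contra hcon
  push_neg at hcon
  -- hcon : ∀ i j, i ≠ j → ∀ φ : S i ≃* S j, ∃ r ∈ R, φ (r i) ≠ r j
  -- triviality of centers
  have hcenter : ∀ (j : Fin k) (z : S j), (∀ t : S j, z * t = t * z) → z = 1 := by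
    intro j z hz
    have hzc : z ∈ Subgroup.center (S j) := Subgroup.mem_center_iff.mpr fun g => (hz g).symm
    rcases (Subgroup.center (S j)).normal_of_characteristic.eq_bot_or_eq_top with hb | ht
    · simpa [hb] using hzc
    · obtain ⟨a, b, hab⟩ := hna j
      exact absurd (Subgroup.mem_center_iff.mp (ht ▸ Subgroup.mem_top a) b) fun h => hab h.symm
  -- main claim
  have key : ∀ T : Finset (Fin k), ∀ i ∉ T, ∀ s : S i, ∃ r ∈ Hsub R T, r i = s := by
    intro T
    induction T using Finset.induction_on with
    | empty =>
      intro i _ s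
      obtain ⟨r, hr, hri⟩ := hproj i s
      exact ⟨r, ⟨hr, fun j hj => absurd hj (Finset.notMem_empty j)⟩, hri⟩
    | @insert j T hjT IH =>
      intro i hi s
      have hij : i ≠ j := fun h => hi (h ▸ Finset.mem_insert_self j T)
      have hiT : i ∉ T := fun h => hi (Finset.mem_insert_of_mem h)
      -- three normal subgroups
      have hL := (Pmap_normal R (insert j T) i (hproj i)).eq_bot_or_eq_top
      have hN := (Pmap_normal R T j (hproj j)).eq_bot_or_eq_top
      have hM := (Pmap_normal R (insert i T) j (hproj j)).eq_bot_or_eq_top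
      rcases hL with hL | hL
      · -- L = ⊥
        rcases hN with hN | hN
        · -- N = ⊥ : Hsub R T ⊆ Hsub R (insert j T)
          obtain ⟨h, hh, hhi⟩ := IH i hiT s
          have hj1 : h j = 1 := by
            have : h j ∈ Pmap R T j := mem_Pmap.mpr ⟨h, hh, rfl⟩
            simpa [hN] using this
          refine ⟨h, ⟨hh.1, fun m hm => ?_⟩, hhi⟩
          rcases Finset.mem_insert.mp hm with rfl | hm
          · exact hj1
          · exact hh.2 m hm
        · -- N = ⊤
          rcases hM with hM | hM
          · -- M = ⊥ : construct the isomorphism, contradiction with hcon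
            set P : Subgroup (S i × S j) :=
              (Hsub R T).map ((Pi.evalMonoidHom S i).prod (Pi.evalMonoidHom S j)) with hP
            have memP : ∀ a b, (a, b) ∈ P ↔ ∃ h ∈ Hsub R T, h i = a ∧ h j = b := by
              intro a b
              simp [hP, Subgroup.mem_map, Prod.ext_iff]
            set f : P →* S i := (MonoidHom.fst (S i) (S j)).comp P.subtype with hf
            have hfinj : Function.Injective f := by
              rw [injective_iff_map_eq_one]
              rintro ⟨⟨a, b⟩, hp⟩ hfa
              have ha : a = 1 := hfa
              obtain ⟨h, hh, hhi, hhj⟩ := (memP a b).mp hp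
              have hb : b = 1 := by
                have : b ∈ Pmap R (insert i T) j := by
                  refine mem_Pmap.mpr ⟨h, ⟨hh.1, fun m hm => ?_⟩, hhj⟩
                  rcases Finset.mem_insert.mp hm with rfl | hm
                  · exact hhi.trans ha
                  · exact hh.2 m hm
                simpa [hM] using this
              ext <;> simp [ha, hb]
            have hfsurj : Function.Surjective f := by
              intro a
              obtain ⟨h, hh, hhi⟩ := IH i hiT a
              exact ⟨⟨(a, h j), (memP a (h j)).mpr ⟨h, hh, hhi, rfl⟩⟩, rfl⟩
            set e : P ≃* S i := MulEquiv.ofBijective f ⟨hfinj, hfsurj⟩ with he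
            set g : P →* S j := (MonoidHom.snd (S i) (S j)).comp P.subtype with hg
            set φ0 : S i →* S j := g.comp e.symm.toMonoidHom with hφ0
            have star : ∀ a b, (a, b) ∈ P → φ0 a = b := by
              intro a b hab
              have : e.symm a = ⟨(a, b), hab⟩ := by
                apply hfinj
                have : f (e.symm a) = e (e.symm a) := rfl
                rw [this, e.apply_symm_apply]
                rfl
              simp [hφ0, this, hg]
            have star2 : ∀ a, (a, φ0 a) ∈ P := by
              intro a
              have h1 : ((e.symm a : P) : S i × S j) = (a, φ0 a) := by
                have hfa : f (e.symm a) = a := e.apply_symm_apply a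
                exact Prod.ext hfa rfl
              rw [← h1]
              exact (e.symm a).2
            have hinj : Function.Injective φ0 := by
              rw [injective_iff_map_eq_one]
              intro a ha
              have : (a, (1 : S j)) ∈ P := ha ▸ star2 a
              obtain ⟨h, hh, hhi, hhj⟩ := (memP a 1).mp this
              have : a ∈ Pmap R (insert j T) i := by
                refine mem_Pmap.mpr ⟨h, ⟨hh.1, fun m hm => ?_⟩, hhi⟩
                rcases Finset.mem_insert.mp hm with rfl | hm
                · exact hhj
                · exact hh.2 m hm
              simpa [hL] using this
            have hsurj : Function.Surjective φ0 := by
              intro t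
              have : t ∈ Pmap R T j := by rw [hN]; trivial
              obtain ⟨h, hh, hhj⟩ := mem_Pmap.mp this
              exact ⟨h i, star (h i) t ((memP (h i) t).mpr ⟨h, hh, rfl, hhj⟩)⟩
            set Φ : S i ≃* S j := MulEquiv.ofBijective φ0 ⟨hinj, hsurj⟩ with hΦ
            have keyΦ : ∀ h ∈ Hsub R T, Φ (h i) = h j := by
              intro h hh
              exact star (h i) (h j) ((memP (h i) (h j)).mpr ⟨h, hh, rfl, rfl⟩)
            have final : ∀ r ∈ R, Φ (r i) = r j := by
              intro r hr
              have hc : ∀ t : S j, ((r j)⁻¹ * Φ (r i)) * t = t * ((r j)⁻¹ * Φ (r i)) := by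
                intro t
                obtain ⟨x, hx⟩ := hsurj t
                obtain ⟨h, hh, hhi⟩ := IH i hiT x
                have hconj := keyΦ (r * h * r⁻¹) (Hsub_conj R T hr hh)
                have e1 : (r * h * r⁻¹) i = r i * h i * (r i)⁻¹ := rfl
                have e2 : (r * h * r⁻¹) j = r j * h j * (r j)⁻¹ := rfl
                have e3 : h j = t := by rw [← keyΦ h hh, hhi]; exact hx
                rw [e1, e2, e3, map_mul, map_mul, map_inv] at hconj
                have hΦx : Φ (h i) = t := by rw [hhi]; exact hx
                rw [hΦx] at hconj
                -- hconj : Φ (r i) * t * (Φ (r i))⁻¹ = r j * t * (r j)⁻¹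
                have h' := congrArg (fun y => (r j)⁻¹ * y * Φ (r i)) hconj
                calc ((r j)⁻¹ * Φ (r i)) * t
                    = (r j)⁻¹ * (Φ (r i) * t * (Φ (r i))⁻¹) * Φ (r i) := by group
                  _ = (r j)⁻¹ * (r j * t * (r j)⁻¹) * Φ (r i) := h'
                  _ = t * ((r j)⁻¹ * Φ (r i)) := by group
              exact (inv_mul_eq_one.mp (hcenter j _ hc)).symm
            obtain ⟨r, hr, hne⟩ := hcon i j hij Φ
            exact (hne (final r hr)).elim
          · -- M = ⊤
            obtain ⟨h, hh, hhi⟩ := IH i hiT s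
            have : (h j)⁻¹ ∈ Pmap R (insert i T) j := by rw [hM]; trivial
            obtain ⟨g, hg, hgj⟩ := mem_Pmap.mp this
            refine ⟨h * g, ⟨R.mul_mem hh.1 hg.1, fun m hm => ?_⟩, ?_⟩
            · rcases Finset.mem_insert.mp hm with rfl | hm
              · show h m * g m = 1
                rw [hgj, mul_inv_cancel]
              · show h m * g m = 1
                rw [hh.2 m hm, hg.2 m (Finset.mem_insert_of_mem hm), one_mul]
            · show h i * g i = s
              rw [hhi, hg.2 i (Finset.mem_insert_self i T), mul_one]
      · -- L = ⊤
        have : s ∈ Pmap R (insert j T) i := by rw [hL]; trivial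
        exact mem_Pmap.mp this
  -- conclude R = ⊤
  apply hR
  rw [eq_top_iff]
  intro x _
  have hsingle : ∀ (i : Fin k) (s : S i), Pi.mulSingle i s ∈ R := by
    intro i s
    obtain ⟨r, hrmem, hri⟩ := key (Finset.univ.erase i) i (by simp) s
    have hr : r = Pi.mulSingle i s := by
      ext m
      by_cases hm : m = i
      · subst hm; simp [hri]
      · rw [Pi.mulSingle_eq_of_ne hm,
          hrmem.2 m (Finset.mem_erase.mpr ⟨hm, Finset.mem_univ m⟩)]
    exact hr ▸ hrmem.1
  rw [← Finset.noncommProd_mulSingle x]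
  exact Subgroup.noncommProd_mem R _ (fun i _ => hsingle i (x i))
end

section
/- Let λ be a lower semi-continuous submeasure on ℕ and consider the group S_λ of permutations σ of ℕ with λ(supp σ ∖ {0,…,n}) → 0, equipped with the left-invariant metric d_λ(σ, τ) = λ({n : σ(n) ≠ τ(n)}). Then S_λ is quasi non-archimedean: for every ε > 0 and k ∈ ℕ, any k elements at d_λ-distance less than ε/k from the identity generate a subgroup contained in the d_λ-ball of radius ε around the identity. -/
open Filter Topology ENNReal

/-- Given a lower semi-continuous submeasure `lam` on `ℕ`, the group `S_λ` of
permutations with `lam (supp σ \ {0,…,n}) → 0`, with the metric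
`d_λ(σ,τ) = lam {n | σ n ≠ τ n}`, is quasi non-archimedean: `k` elements at distance
less than `ε / k` from the identity generate a subgroup contained in the ball of
radius `ε` around the identity. -/
theorem stmt17 (lam : Set ℕ → ℝ≥0∞)
    (h0 : lam ∅ = 0)
    (hsing : ∀ n : ℕ, 0 < lam {n} ∧ lam {n} < ⊤)
    (hmono : ∀ A B : Set ℕ, A ⊆ B → lam A ≤ lam B)
    (hsub : ∀ A B : Set ℕ, lam (A ∪ B) ≤ lam A + lam B)
    (hlsc : ∀ A : ℕ → Set ℕ, Monotone A →
      Tendsto (fun k => lam (A k)) atTop (𝓝 (lam (⋃ k, A k))))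
    (ε : ℝ≥0∞) (hε : 0 < ε) (k : ℕ) (g : Fin k → Equiv.Perm ℕ)
    (hmem : ∀ i, Tendsto (fun n : ℕ => lam ({m | g i m ≠ m} \ Set.Iic n)) atTop (𝓝 0))
    (hg : ∀ i, lam {m | g i m ≠ m} < ε / k) :
    ∀ h ∈ Subgroup.closure (Set.range g), lam {m | h m ≠ m} < ε := by
  -- supports of elements of the closure are contained in the union of supports
  have hsupp : ∀ h ∈ Subgroup.closure (Set.range g),
      {m | h m ≠ m} ⊆ ⋃ i, {m | g i m ≠ m} := by
    intro h hh
    induction hh using Subgroup.closure_induction with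
    | mem x hx =>
      obtain ⟨i, rfl⟩ := hx
      exact Set.subset_iUnion (fun i => {m | g i m ≠ m}) i
    | one => intro m hm; exact absurd rfl hm
    | mul a b ha hb iha ihb =>
      intro m hm
      by_cases hbm : b m = m
      · apply iha
        simpa [Equiv.Perm.mul_apply, hbm] using hm
      · exact ihb hbm
    | inv a ha iha =>
      intro m hm
      apply iha
      simp only [Set.mem_setOf_eq] at hm ⊢
      intro hcon
      exact hm (by conv_lhs => rw [← hcon, ← Equiv.Perm.mul_apply, inv_mul_cancel, Equiv.Perm.one_apply])
  -- finite subadditivity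
  have hfin : ∀ (s : Finset (Fin k)),
      lam (⋃ i ∈ s, {m | g i m ≠ m}) ≤ ∑ i ∈ s, lam {m | g i m ≠ m} := by
    intro s
    induction s using Finset.induction with
    | empty => simp [h0]
    | @insert a s hx ih =>
      rw [Finset.set_biUnion_insert, Finset.sum_insert hx]
      exact le_trans (hsub _ _) (add_le_add_right ih _)
  have hunion : lam (⋃ i, {m | g i m ≠ m}) ≤ ∑ i, lam {m | g i m ≠ m} := by
    simpa using hfin Finset.univ
  intro h hh
  have hle : lam {m | h m ≠ m} ≤ ∑ i, lam {m | g i m ≠ m} :=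
    le_trans (hmono _ _ (hsupp h hh)) hunion
  rcases Nat.eq_zero_or_pos k with hk | hk
  · subst hk
    calc lam {m | h m ≠ m} ≤ ∑ i : Fin 0, lam {m | g i m ≠ m} := hle
    _ = 0 := by simp
    _ < ε := hε
  have hk0 : (k : ℝ≥0∞) ≠ 0 := Nat.cast_ne_zero.mpr hk.ne'
  have hktop : (k : ℝ≥0∞) ≠ ⊤ := ENNReal.natCast_ne_top k
  by_cases hεtop : ε = ⊤
  · refine lt_of_le_of_lt hle ?_
    rw [hεtop]
    refine ENNReal.sum_lt_top.mpr fun i _ => ?_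
    exact lt_of_lt_of_le (hg i) le_top
  · refine lt_of_le_of_lt hle ?_
    have : ∑ i : Fin k, lam {m | g i m ≠ m} < ∑ _i : Fin k, ε / k := by
      refine ENNReal.sum_lt_sum_of_nonempty ?_ fun i _ => hg i
      exact Finset.univ_nonempty_iff.mpr (Fin.pos_iff_nonempty.mp hk)
    calc ∑ i : Fin k, lam {m | g i m ≠ m} < ∑ _i : Fin k, ε / k := this
    _ = k * (ε / k) := by simp [Finset.sum_const, nsmul_eq_mul]
    _ = ε := ENNReal.mul_div_cancel hk0 hktop
end

section
/- Consider the submeasure λ on ℕ≥1 given by λ(A) = Σ_{n∈A} 1/n, and the group S_λ of permutations σ with λ(supp σ) < ∞ equipped with the metric d_λ(σ,τ) = λ({n : σ(n) ≠ τ(n)}). Then S_λ is not non-archimedean: for every ε > 0 and every M > 0, the subgroup generated by the d_λ-ball of radius ε around the identity contains an element at distance greater than M from the identity. -/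
open ENNReal NNReal

lemma aux_swap_comm (k l : ℕ) (h : k ≠ l) :
    Commute (Equiv.swap (2*k) (2*k+1)) (Equiv.swap (2*l) (2*l+1)) := by
  apply Equiv.Perm.Disjoint.commute
  intro x
  rcases eq_or_ne x (2*k) with rfl | h1
  · right; apply Equiv.swap_apply_of_ne_of_ne <;> omega
  rcases eq_or_ne x (2*k+1) with rfl | h2
  · right; apply Equiv.swap_apply_of_ne_of_ne <;> omega
  · left; exact Equiv.swap_apply_of_ne_of_ne h1 h2

lemma aux_harmonic : ∑' i : ℕ, ((i : ℝ≥0∞) + 1)⁻¹ = ⊤ := by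
  by_contra h
  have key : ∀ i : ℕ, ((((i : ℝ≥0) + 1)⁻¹ : ℝ≥0) : ℝ≥0∞) = ((i : ℝ≥0∞) + 1)⁻¹ := by
    intro i
    rw [ENNReal.coe_inv (by positivity)]
    push_cast
    rfl
  have hs : Summable (fun i : ℕ => ((i : ℝ≥0) + 1)⁻¹) := by
    rw [← ENNReal.tsum_coe_ne_top_iff_summable]
    simp_rw [key]; exact h
  have hs' : Summable (fun i : ℕ => ((i : ℝ) + 1)⁻¹) := by
    have := NNReal.summable_coe.mpr hs
    simpa using this
  have : Summable (fun i : ℕ => (i : ℝ)⁻¹) := by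
    refine (_root_.summable_nat_add_iff 1).mp ?_
    simpa using hs'
  exact Real.not_summable_natCast_inv this

lemma aux_prod (F : Finset ℕ) :
    (∀ n : ℕ, n / 2 ∉ F →
      F.noncommProd (fun k => Equiv.swap (2*k) (2*k+1))
        (fun x _ y _ hxy => aux_swap_comm x y hxy) n = n) ∧
    (∀ k ∈ F, F.noncommProd (fun k => Equiv.swap (2*k) (2*k+1))
        (fun x _ y _ hxy => aux_swap_comm x y hxy) (2*k+1) = 2*k) := by
  classical
  induction F using Finset.induction with
  | empty => simp; intro n; exact congrArg (fun g : Equiv.Perm ℕ => g n) (Finset.noncommProd_empty _ _)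
  | @insert a F ha ih =>
    have hrw := Finset.noncommProd_insert_of_notMem F a
      (fun k => Equiv.swap (2*k) (2*k+1))
      (fun x _ y _ hxy => aux_swap_comm x y hxy) ha
    constructor
    · intro n hn
      rw [hrw, Equiv.Perm.mul_apply]
      rw [Finset.mem_insert] at hn
      push_neg at hn
      rw [ih.1 n hn.2]
      exact Equiv.swap_apply_of_ne_of_ne (by omega) (by omega)
    · intro k hk
      rw [hrw, Equiv.Perm.mul_apply]
      rcases Finset.mem_insert.mp hk with rfl | hk
      · have h2 : (2*k+1)/2 = k := by omega
        rw [ih.1 (2*k+1) (by rw [h2]; exact ha)]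
        exact Equiv.swap_apply_right _ _
      · rw [ih.2 k hk]
        have hka : k ≠ a := fun h => ha (h ▸ hk)
        exact Equiv.swap_apply_of_ne_of_ne (by omega) (by omega)

/-- For the submeasure `lam A = Σ_{n ∈ A} 1/n`, the group `S_λ` is not
non-archimedean: for every `ε > 0` and `M > 0`, the subgroup generated by the ball of
radius `ε` around the identity contains an element at distance greater than `M` from
the identity. -/
theorem stmt18 (lam : Set ℕ → ℝ≥0∞)
    (hlam : ∀ A : Set ℕ, lam A = ∑' n : A, (1 : ℝ≥0∞) / ((n : ℕ) : ℝ≥0∞))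
    (ε M : ℝ≥0∞) (hε : 0 < ε) (hε' : ε ≠ ⊤) (hM : 0 < M) (hM' : M ≠ ⊤) :
    ∃ σ ∈ Subgroup.closure {τ : Equiv.Perm ℕ | lam {n | τ n ≠ n} < ε},
      M < lam {n | σ n ≠ n} := by
  classical
  obtain ⟨n0, hn0⟩ := ENNReal.exists_inv_nat_lt hε.ne'
  set N : ℕ := max n0 1 with hNdef
  have hN1 : 1 ≤ N := le_max_right _ _
  have hNε : ((N : ℝ≥0∞))⁻¹ < ε := by
    refine lt_of_le_of_lt ?_ hn0
    gcongr
    exact_mod_cast le_max_left n0 1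
  -- every swap of (2k, 2k+1) with k ≥ N is in the ball
  have hswap : ∀ k : ℕ, N ≤ k →
      Equiv.swap (2*k) (2*k+1) ∈ {τ : Equiv.Perm ℕ | lam {n | τ n ≠ n} < ε} := by
    intro k hk
    have hk1 : 1 ≤ k := le_trans hN1 hk
    have hsupp : {n : ℕ | Equiv.swap (2*k) (2*k+1) n ≠ n} = ({2*k, 2*k+1} : Finset ℕ) := by
      ext n
      simp only [Set.mem_setOf_eq, Finset.coe_insert, Finset.coe_singleton,
        Set.mem_insert_iff, Set.mem_singleton_iff]
      constructor
      · intro hn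
        by_contra hcon
        push_neg at hcon
        exact hn (Equiv.swap_apply_of_ne_of_ne hcon.1 hcon.2)
      · rintro (rfl | rfl)
        · rw [Equiv.swap_apply_left]; omega
        · rw [Equiv.swap_apply_right]; omega
    have hval : lam {n : ℕ | Equiv.swap (2*k) (2*k+1) n ≠ n}
        = ((2*k : ℕ) : ℝ≥0∞)⁻¹ + ((2*k+1 : ℕ) : ℝ≥0∞)⁻¹ := by
      rw [hlam, hsupp,
        Finset.tsum_subtype' ({2*k, 2*k+1} : Finset ℕ) (fun n : ℕ => (1:ℝ≥0∞)/(n:ℝ≥0∞)),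
        Finset.sum_pair (by omega : 2*k ≠ 2*k+1)]
      simp [one_div]
    rw [Set.mem_setOf_eq, hval]
    have h1 : ((2*k : ℕ) : ℝ≥0∞)⁻¹ ≤ ((2*N : ℕ) : ℝ≥0∞)⁻¹ := by
      gcongr <;> exact_mod_cast (by omega : 2*N ≤ 2*k)
    have h2 : ((2*k+1 : ℕ) : ℝ≥0∞)⁻¹ ≤ ((2*N : ℕ) : ℝ≥0∞)⁻¹ := by
      gcongr <;> exact_mod_cast (by omega : 2*N ≤ 2*k+1)
    have h3 : ((2*N : ℕ) : ℝ≥0∞)⁻¹ + ((2*N : ℕ) : ℝ≥0∞)⁻¹ = ((N : ℕ) : ℝ≥0∞)⁻¹ := by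
      have hcast : ((2*N : ℕ) : ℝ≥0∞) = 2 * (N : ℝ≥0∞) := by push_cast; ring
      have hNt : (N : ℝ≥0∞) ≠ ⊤ := ENNReal.natCast_ne_top N
      have hN0 : (N : ℝ≥0∞) ≠ 0 := Nat.cast_ne_zero.mpr (by omega)
      rw [hcast, ENNReal.mul_inv (Or.inr hNt) (Or.inr hN0), ← two_mul, ← mul_assoc,
        ENNReal.mul_inv_cancel (two_ne_zero) (ENNReal.ofNat_ne_top), one_mul]
    calc ((2*k : ℕ) : ℝ≥0∞)⁻¹ + ((2*k+1 : ℕ) : ℝ≥0∞)⁻¹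
        ≤ ((2*N : ℕ) : ℝ≥0∞)⁻¹ + ((2*N : ℕ) : ℝ≥0∞)⁻¹ := add_le_add h1 h2
      _ = ((N : ℕ) : ℝ≥0∞)⁻¹ := h3
      _ < ε := hNε
  -- divergence: the tail harmonic sum is infinite
  have hle : ∀ i : ℕ, ((2*N+2 : ℕ) : ℝ≥0∞)⁻¹ * ((i : ℝ≥0∞) + 1)⁻¹
      ≤ ((2*(i+N)+1 : ℕ) : ℝ≥0∞)⁻¹ := by
    intro i
    have hi1 : ((i : ℝ≥0∞) + 1) = ((i+1 : ℕ) : ℝ≥0∞) := by push_cast; ring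
    have hz : ((2*N+2 : ℕ) : ℝ≥0∞) ≠ 0 := Nat.cast_ne_zero.mpr (by omega)
    rw [hi1, ← ENNReal.mul_inv (Or.inl hz) (Or.inl (ENNReal.natCast_ne_top _))]
    gcongr
    rw [← Nat.cast_mul, Nat.cast_le]
    nlinarith [Nat.zero_le (N*i)]
  have htop : ∑' i : ℕ, ((2*(i+N)+1 : ℕ) : ℝ≥0∞)⁻¹ = ⊤ := by
    refine top_unique ?_
    have hc0 : ((2*N+2 : ℕ) : ℝ≥0∞)⁻¹ ≠ 0 :=
      ENNReal.inv_ne_zero.mpr (ENNReal.natCast_ne_top _)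
    calc (⊤ : ℝ≥0∞) = ((2*N+2 : ℕ) : ℝ≥0∞)⁻¹ * ⊤ := by
          rw [ENNReal.mul_top hc0]
      _ = ((2*N+2 : ℕ) : ℝ≥0∞)⁻¹ * ∑' i : ℕ, ((i : ℝ≥0∞) + 1)⁻¹ := by rw [aux_harmonic]
      _ = ∑' i : ℕ, ((2*N+2 : ℕ) : ℝ≥0∞)⁻¹ * ((i : ℝ≥0∞) + 1)⁻¹ :=
          ENNReal.tsum_mul_left.symm
      _ ≤ ∑' i : ℕ, ((2*(i+N)+1 : ℕ) : ℝ≥0∞)⁻¹ := ENNReal.tsum_le_tsum hle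
  -- choose a finite partial sum exceeding M
  have hMlt : M < ∑' i : ℕ, ((2*(i+N)+1 : ℕ) : ℝ≥0∞)⁻¹ := by
    rw [htop]; exact hM'.lt_top
  rw [ENNReal.tsum_eq_iSup_sum, lt_iSup_iff] at hMlt
  obtain ⟨s, hs⟩ := hMlt
  set F : Finset ℕ := s.image (fun i => i + N) with hFdef
  have hFge : ∀ k ∈ F, N ≤ k := by
    intro k hk
    obtain ⟨i, _, rfl⟩ := Finset.mem_image.mp hk
    omega
  have hFsum : M < ∑ k ∈ F, ((2*k+1 : ℕ) : ℝ≥0∞)⁻¹ := by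
    rwa [hFdef, Finset.sum_image (fun x _ y _ h => by omega)]
  -- the product of the swaps over F
  set σ : Equiv.Perm ℕ := F.noncommProd (fun k => Equiv.swap (2*k) (2*k+1))
    (fun x _ y _ hxy => aux_swap_comm x y hxy) with hσdef
  refine ⟨σ, ?_, ?_⟩
  · exact Subgroup.noncommProd_mem _ _ (fun k hk =>
      Subgroup.subset_closure (hswap k (hFge k hk)))
  · -- lower bound for lam of support
    set t : Finset ℕ := F.image (fun k => 2*k+1) with htdef
    have htsub : ∀ m ∈ t, σ m ≠ m := by
      intro m hm
      obtain ⟨k, hk, rfl⟩ := Finset.mem_image.mp hm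
      rw [hσdef, (aux_prod F).2 k hk]
      omega
    have hbound : ∑ m ∈ t, ((m : ℕ) : ℝ≥0∞)⁻¹ ≤ lam {n | σ n ≠ n} := by
      rw [hlam, tsum_subtype {n | σ n ≠ n} (fun n : ℕ => (1:ℝ≥0∞)/(n:ℝ≥0∞))]
      calc ∑ m ∈ t, ((m : ℕ) : ℝ≥0∞)⁻¹
          = ∑ m ∈ t, Set.indicator {n | σ n ≠ n}
              (fun n : ℕ => (1 : ℝ≥0∞) / (n : ℝ≥0∞)) m := by
            refine Finset.sum_congr rfl fun m hm => ?_
            rw [Set.indicator_of_mem (show m ∈ {n : ℕ | σ n ≠ n} from htsub m hm)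
              (fun n : ℕ => (1:ℝ≥0∞)/(n:ℝ≥0∞)), one_div]
        _ ≤ ∑' n : ℕ, Set.indicator {n | σ n ≠ n}
              (fun n : ℕ => (1 : ℝ≥0∞) / (n : ℝ≥0∞)) n := ENNReal.sum_le_tsum t
    have htsum : ∑ m ∈ t, ((m : ℕ) : ℝ≥0∞)⁻¹ = ∑ k ∈ F, ((2*k+1 : ℕ) : ℝ≥0∞)⁻¹ := by
      rw [htdef, Finset.sum_image (fun x _ y _ h => by omega)]
    exact lt_of_lt_of_le (htsum ▸ hFsum) hbound
end

section
/- Let G be a Polish group and (X, μ) a standard probability space. If G is quasi non-archimedean, then the group L⁰(X, μ, G) of measurable maps X → G (mod null sets), with pointwise multiplication and the topology of convergence in measure, is quasi non-archimedean. -/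
open MeasureTheory Topology ENNReal

/-- If `G` is a quasi non-archimedean Polish group, then `L⁰(X, μ, G)` with the
topology of convergence in measure is quasi non-archimedean: for every basic
neighborhood `Ũ_ε` of the identity and every `n`, there is a basic neighborhood
`Ṽ_δ` such that any `n` elements of `Ṽ_δ` generate a subgroup contained in `Ũ_ε`. -/
theorem stmt19 {X G : Type*} [MeasurableSpace X] (μ : Measure X) [IsProbabilityMeasure μ]
    [Group G] [TopologicalSpace G] [IsTopologicalGroup G] [PolishSpace G]
    (hG : QuasiNonArchimedean G) :
    ∀ U ∈ 𝓝 (1 : G), ∀ ε : ℝ≥0∞, 0 < ε → ∀ n : ℕ,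
      ∃ V ∈ 𝓝 (1 : G), ∃ δ : ℝ≥0∞, 0 < δ ∧
        ∀ f : Fin n → (X → G), (∀ i, μ {x | f i x ∉ V} < δ) →
          ∀ h ∈ Subgroup.closure (Set.range f), μ {x | h x ∉ U} < ε := by
  intro U hU ε hε n
  obtain ⟨V, hV, hVU⟩ := hG U hU n
  refine ⟨V, hV, ε / (n + 1), ENNReal.div_pos hε.ne' (by simp), ?_⟩
  intro f hf h hh
  set δ : ℝ≥0∞ := ε / (n + 1) with hδ
  set B : Set X := ⋃ i, {x | f i x ∉ V} with hBdef
  have hsub : {x | h x ∉ U} ⊆ B := by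
    intro x hx
    by_contra hxB
    apply hx
    have hfx : ∀ i, f i x ∈ V := by
      intro i
      by_contra hc
      exact hxB (Set.mem_iUnion.2 ⟨i, hc⟩)
    have hmap : h x ∈ (Subgroup.closure (Set.range f)).map
        (Pi.evalMonoidHom (fun _ : X => G) x) :=
      Subgroup.mem_map_of_mem _ hh
    rw [MonoidHom.map_closure] at hmap
    have : h x ∈ Subgroup.closure (Set.range fun i => f i x) := by
      convert hmap using 3
      rw [← Set.range_comp]
      rfl
    exact hVU (fun i => f i x) hfx this
  have hμB : μ B ≤ n * δ := by
    calc μ B ≤ ∑' i : Fin n, μ {x | f i x ∉ V} := measure_iUnion_le _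
      _ = ∑ i : Fin n, μ {x | f i x ∉ V} := tsum_fintype _
      _ ≤ Finset.univ.card • δ :=
          Finset.sum_le_card_nsmul _ _ δ (fun i _ => (hf i).le)
      _ = n * δ := by simp [nsmul_eq_mul]
  rcases eq_or_ne ε ⊤ with rfl | hεtop
  · exact (measure_lt_top μ _).trans_le le_top
  · have hδtop : δ ≠ ⊤ := by
      simp [hδ, ENNReal.div_eq_top, hεtop]
    have hδ0 : δ ≠ 0 := (ENNReal.div_pos hε.ne' (by simp)).ne'
    have hlt : (n : ℝ≥0∞) * δ < ε := by
      have : (n : ℝ≥0∞) * δ < (n + 1) * δ := by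
        exact ENNReal.mul_lt_mul_iff_left hδ0 hδtop |>.2 (by
          exact ENNReal.lt_add_right (by simp) one_ne_zero )
      calc (n : ℝ≥0∞) * δ < (n + 1) * δ := this
        _ = ε := by
            rw [hδ, ENNReal.mul_div_cancel' (by simp) (by simp)]
    exact ((measure_mono hsub).trans hμB).trans_lt hlt
end
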